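/- Let (Ω, F, P) be a probability space, let n ≥ 1 and N ≥ 1 be natural numbers, let p ∈ (0, 1], and let X_1, …, X_n : Ω → {0, 1} be random indicator variables (X_i indicating survival of the stale entry created at update i) such that P(X_i = 1) ≤ (1 − p)^{⌊(n − i)/N⌋} for every i. Then the expected number of surviving stale entries satisfies E[Σ_{i=1}^{n} X_i] ≤ N / p. -/

import Mathlib

open MeasureTheory Finset

/-
Each stale entry contributes its survival probability to the expectation, so the expectation is at
most `∑ q ^ ⌊k / N⌋` over `k < n` with `q = 1 - p` (after reversing the order of updates). The
exponent `⌊k / N⌋` is constant on blocks of `N` consecutive `k`, so this sum is at most `N` times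
the geometric series `∑ q ^ m = 1 / p`.
-/

theorem eq_indicator_one_of_eq_zero_or_one {Ω : Type*} {X : Ω → ℝ}
    (h01 : ∀ ω, X ω = 0 ∨ X ω = 1) : X = {ω | X ω = 1}.indicator 1 := by
  funext ω
  rcases h01 ω with h | h <;> simp [h]

section

variable {Ω : Type*} [MeasurableSpace Ω] {μ : Measure Ω} {X : Ω → ℝ}

theorem integrable_of_eq_zero_or_one [IsFiniteMeasure μ] (hX : Measurable X)
    (h01 : ∀ ω, X ω = 0 ∨ X ω = 1) : Integrable X μ := by
  rw [eq_indicator_one_of_eq_zero_or_one h01]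
  exact (integrable_const 1).indicator (hX (measurableSet_singleton 1))

theorem integral_eq_measureReal_of_eq_zero_or_one (hX : Measurable X)
    (h01 : ∀ ω, X ω = 0 ∨ X ω = 1) : ∫ ω, X ω ∂μ = μ.real {ω | X ω = 1} := by
  conv_lhs => rw [eq_indicator_one_of_eq_zero_or_one h01]
  exact integral_indicator_one (hX (measurableSet_singleton 1))

end

theorem sum_range_mul_pow_div {R : Type*} [CommSemiring R] (q : R) (N m : ℕ) :
    ∑ j ∈ range (N * m), q ^ (j / N) = N * ∑ k ∈ range m, q ^ k := by
  induction m with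
  | zero => simp
  | succ m ih =>
    have block : ∀ r ∈ range N, q ^ ((N * m + r) / N) = q ^ m := fun r hr => by
      replace hr : r < N := mem_range.mp hr
      rw [Nat.mul_add_div (by lia), Nat.div_eq_of_lt hr, add_zero]
    rw [Nat.mul_succ, sum_range_add, ih, sum_congr rfl block, sum_range_succ, sum_const,
      card_range, nsmul_eq_mul, mul_add]

theorem sum_range_pow_div_le {q : ℝ} (hq0 : 0 ≤ q) (hq1 : q < 1) {N : ℕ} (hN : 0 < N) (n : ℕ) :
    ∑ j ∈ range n, q ^ (j / N) ≤ N / (1 - q) :=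
  calc ∑ j ∈ range n, q ^ (j / N)
      ≤ ∑ j ∈ range (N * n), q ^ (j / N) :=
        sum_le_sum_of_subset_of_nonneg (range_subset_range.mpr (Nat.le_mul_of_pos_left n hN))
          fun _ _ _ => pow_nonneg hq0 _
    _ = N * ∑ k ∈ range n, q ^ k := sum_range_mul_pow_div q N n
    _ ≤ N * (1 / (1 - q)) := by
        gcongr
        simpa using geom_sum_Ico_le_of_lt_one (m := 0) (n := n) hq0 hq1
    _ = N / (1 - q) := mul_one_div _ _

theorem sleepgate_expected_stale_le_general
    {Ω : Type*} [MeasurableSpace Ω] (P : Measure Ω) [IsProbabilityMeasure P]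
    (n N : ℕ) (hN : 1 ≤ N)
    (p : ℝ) (hp0 : 0 < p) (hp1 : p ≤ 1)
    (X : Fin n → Ω → ℝ) (hmeas : ∀ i, Measurable (X i))
    (h01 : ∀ i ω, X i ω = 0 ∨ X i ω = 1)
    (hsurv : ∀ i : Fin n,
      P {ω | X i ω = 1} ≤ ENNReal.ofReal ((1 - p) ^ ((n - (i.1 + 1)) / N))) :
    ∫ ω, (∑ i, X i ω) ∂P ≤ (N : ℝ) / p := by
  have hq0 : 0 ≤ 1 - p := by linarith
  have expect_le : ∀ i, ∫ ω, X i ω ∂P ≤ (1 - p) ^ ((n - (i.1 + 1)) / N) := fun i => by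
    rw [integral_eq_measureReal_of_eq_zero_or_one (hmeas i) (h01 i)]
    exact ENNReal.toReal_le_of_le_ofReal (pow_nonneg hq0 _) (hsurv i)
  calc ∫ ω, (∑ i, X i ω) ∂P
      = ∑ i, ∫ ω, X i ω ∂P :=
        integral_finsetSum _ fun i _ => integrable_of_eq_zero_or_one (hmeas i) (h01 i)
    _ ≤ ∑ i : Fin n, (1 - p) ^ ((n - (i.1 + 1)) / N) := sum_le_sum fun i _ => expect_le i
    _ = ∑ j ∈ range n, (1 - p) ^ (j / N) := by
        rw [Fin.sum_univ_eq_sum_range (fun j => (1 - p) ^ ((n - (j + 1)) / N)),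
          ← sum_range_reflect (fun j => (1 - p) ^ (j / N)) n]
        simp only [Nat.sub_sub, add_comm]
    _ ≤ N / (1 - (1 - p)) := sum_range_pow_div_le hq0 (by linarith) hN n
    _ = N / p := by rw [sub_sub_cancel]

/-- Let `(Ω, F, P)` be a probability space, `n ≥ 1`, `N ≥ 1` natural numbers,
`p ∈ (0, 1]`, and `X_1, …, X_n : Ω → {0, 1}` random indicator variables
(indexed here by `i : Fin n`, with `X i` the indicator of survival of the stale
entry created at update `i + 1`) such that
`P(X_i = 1) ≤ (1 - p) ^ ⌊(n - i)/N⌋` for every `i`. Then the expected number of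
surviving stale entries satisfies `E[∑ i, X i] ≤ N / p`. -/
theorem sleepgate_expected_stale_le
    {Ω : Type*} [MeasurableSpace Ω] (P : Measure Ω) [IsProbabilityMeasure P]
    (n N : ℕ) (hn : 1 ≤ n) (hN : 1 ≤ N)
    (p : ℝ) (hp0 : 0 < p) (hp1 : p ≤ 1)
    (X : Fin n → Ω → ℝ) (hmeas : ∀ i, Measurable (X i))
    (h01 : ∀ i ω, X i ω = 0 ∨ X i ω = 1)
    (hsurv : ∀ i : Fin n,
      P {ω | X i ω = 1} ≤ ENNReal.ofReal ((1 - p) ^ ((n - (i.1 + 1)) / N))) :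
    ∫ ω, (∑ i, X i ω) ∂P ≤ (N : ℝ) / p :=
  sleepgate_expected_stale_le_general P n N hN p hp0 hp1 X hmeas h01 hsurv
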